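/- arXiv:1412.0308 — 2 statements merged into one kernel-verified Lean document; each statement's English description precedes it below -/
import Mathlib

section
/- Let a, b, c be integers with 0 < c < b < a. If there exists a complex number v with |v| = 1 such that v^a + v^b + v^c + 1 = 0, then there exists a root of unity w (i.e. a complex number w with w^m = 1 for some positive integer m) such that w^a + w^b + w^c + 1 = 0. Consequently, for K = {0, c, b, a} with gcd(a, b, c) = 1, the system A(K) has a nontrivial bounded complex solution if and only if it has a nontrivial periodic complex solution. -/
/-!
If `x` is a nonzero bounded solution of `A(K)`, the characteristic polynomial `∑_{s ∈ K} X ^ s`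
has a root on the unit circle: split it into linear factors `X - r` and peel them off one at a
time, since a bounded sequence with `y (n + 1) = r * y n` and `‖r‖ ≠ 1` vanishes. For
`K = {0, c, b, a}` such a root `v` makes the four unit vectors `1, vᶜ, vᵇ, vᵃ` sum to zero, so they
cancel in pairs: `vᵏ = -1` for some `k`, and `v` is a root of unity. A root of unity `w` of the
characteristic polynomial gives the periodic solution `n ↦ wⁿ`, and periodic sequences are bounded.
-/

open Polynomial

theorem add_eq_zero_or_of_norm_eq_one_of_sum_eq_zero {u₁ u₂ u₃ u₄ : ℂ}
    (h₁ : ‖u₁‖ = 1) (h₂ : ‖u₂‖ = 1) (h₃ : ‖u₃‖ = 1) (h₄ : ‖u₄‖ = 1)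
    (hsum : u₁ + u₂ + u₃ + u₄ = 0) :
    u₁ + u₂ = 0 ∨ u₁ + u₃ = 0 ∨ u₁ + u₄ = 0 := by
  have hne : ∀ {u : ℂ}, ‖u‖ = 1 → u ≠ 0 := fun h => norm_ne_zero_iff.mp (by simp [h])
  -- Conjugation inverts unit vectors, so `∑ uᵢ⁻¹ = 0`: the third elementary symmetric
  -- function of the `uᵢ` vanishes along with the first.
  have hinv : u₁⁻¹ + u₂⁻¹ + u₃⁻¹ + u₄⁻¹ = 0 := by
    simpa [Complex.inv_eq_conj, h₁, h₂, h₃, h₄] using congrArg (starRingEnd ℂ) hsum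
  have he₃ : u₂ * u₃ * u₄ + u₁ * u₃ * u₄ + u₁ * u₂ * u₄ + u₁ * u₂ * u₃ = 0 := by
    field_simp [hne h₁, hne h₂, hne h₃, hne h₄] at hinv
    linear_combination hinv
  have hprod : (u₁ + u₂) * (u₁ + u₃) * (u₁ + u₄) = 0 := by
    linear_combination u₁ ^ 2 * hsum + he₃
  simpa [mul_eq_zero, or_assoc] using hprod

theorem isOfFinOrder_of_norm_eq_one_of_pow_add_pow_add_pow_add_one_eq_zero {v : ℂ} {a b c : ℕ}
    (hv : ‖v‖ = 1) (h : v ^ a + v ^ b + v ^ c + 1 = 0) : IsOfFinOrder v := by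
  have hpow : ∀ k : ℕ, ‖v ^ k‖ = 1 := fun k => by rw [norm_pow, hv, one_pow]
  obtain ⟨k, hk⟩ : ∃ k : ℕ, 1 + v ^ k = 0 := by
    rcases add_eq_zero_or_of_norm_eq_one_of_sum_eq_zero (u₁ := 1) norm_one (hpow a) (hpow b)
      (hpow c) (by linear_combination h) with h | h | h
    exacts [⟨a, h⟩, ⟨b, h⟩, ⟨c, h⟩]
  have hk' : v ^ k = -1 := by linear_combination hk
  have hk₀ : k ≠ 0 := by rintro rfl; norm_num at hk
  exact isOfFinOrder_iff_pow_eq_one.mpr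
    ⟨2 * k, by omega, by rw [mul_comm, pow_mul, hk', neg_one_sq]⟩

namespace IntSeq

variable {𝕜 : Type*} [NormedField 𝕜]

noncomputable def shift : Module.End 𝕜 (ℤ → 𝕜) := LinearMap.funLeft 𝕜 𝕜 (· + 1)

@[simp]
theorem shift_apply (x : ℤ → 𝕜) (n : ℤ) : shift x n = x (n + 1) := rfl

theorem shift_pow_apply (k : ℕ) (x : ℤ → 𝕜) (n : ℤ) : (shift ^ k) x n = x (n + k) := by
  induction k generalizing x with
  | zero => simp
  | succ k ih =>
    rw [pow_succ, Module.End.mul_apply, ih, shift_apply, Nat.cast_succ, add_assoc]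

theorem aeval_shift_sum_X_pow_apply (K : Finset ℕ) (x : ℤ → 𝕜) (n : ℤ) :
    aeval shift (∑ s ∈ K, X ^ s : 𝕜[X]) x n = ∑ s ∈ K, x (n + s) := by
  simp [map_sum, LinearMap.sum_apply, Finset.sum_apply, shift_pow_apply]

variable (𝕜) in
def bounded : Submodule 𝕜 (ℤ → 𝕜) where
  carrier := {x | ∃ M, ∀ n, ‖x n‖ ≤ M}
  add_mem' := by
    rintro x y ⟨M, hM⟩ ⟨N, hN⟩
    exact ⟨M + N, fun n => (norm_add_le _ _).trans (add_le_add (hM n) (hN n))⟩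
  zero_mem' := ⟨0, by simp⟩
  smul_mem' := by
    rintro c x ⟨M, hM⟩
    exact ⟨‖c‖ * M, fun n => by
      rw [Pi.smul_apply, smul_eq_mul, norm_mul]; gcongr; exact hM n⟩

theorem aeval_shift_mem_bounded (P : 𝕜[X]) {x : ℤ → 𝕜} (hx : x ∈ bounded 𝕜) :
    aeval shift P x ∈ bounded 𝕜 := by
  induction P using Polynomial.induction_on' with
  | add P Q hP hQ => rw [map_add, LinearMap.add_apply]; exact add_mem hP hQ
  | monomial k c =>
    rw [aeval_monomial, Module.End.mul_apply, Module.algebraMap_end_apply]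
    refine Submodule.smul_mem _ c ?_
    obtain ⟨M, hM⟩ := hx
    exact ⟨M, fun n => by rw [shift_pow_apply]; exact hM _⟩

theorem eq_zero_of_norm_le_pow_mul {z : 𝕜} {q M : ℝ} (hq₀ : 0 ≤ q) (hq₁ : q < 1)
    (h : ∀ k : ℕ, ‖z‖ ≤ q ^ k * M) : z = 0 := by
  have hlim := (tendsto_pow_atTop_nhds_zero_of_lt_one hq₀ hq₁).mul_const M
  rw [zero_mul] at hlim
  exact norm_le_zero_iff.mp (ge_of_tendsto' hlim h)

theorem eq_zero_of_mem_bounded_of_apply_add_one {y : ℤ → 𝕜} {r : 𝕜} (hr : ‖r‖ ≠ 1)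
    (hy : y ∈ bounded 𝕜) (hrec : ∀ n, y (n + 1) = r * y n) : y = 0 := by
  have hpow : ∀ (k : ℕ) n, y (n + k) = r ^ k * y n := by
    intro k
    induction k with
    | zero => simp
    | succ k ih => intro n; rw [Nat.cast_succ, ← add_assoc, hrec, ih, pow_succ']; ring
  obtain ⟨M, hM⟩ := hy
  funext n
  -- Compare `y n` with `y (n - k)` if `‖r‖ < 1` and with `y (n + k)` if `‖r‖ > 1`.
  rcases hr.lt_or_gt with hlt | hgt
  · refine eq_zero_of_norm_le_pow_mul (M := M) (norm_nonneg r) hlt fun k => ?_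
    rw [show n = n - k + k by ring, hpow, norm_mul, norm_pow]
    gcongr; exact hM _
  · have hr₀ : 0 < ‖r‖ := one_pos.trans hgt
    refine eq_zero_of_norm_le_pow_mul (M := M) (inv_nonneg.mpr hr₀.le)
      (inv_lt_one_of_one_lt₀ hgt) fun k => ?_
    have := hpow k n
    rw [inv_pow, ← div_eq_inv_mul, le_div_iff₀ (pow_pos hr₀ k), ← norm_pow, ← norm_mul, mul_comm,
      ← this]
    exact hM _

theorem eq_zero_of_aeval_shift_prod_X_sub_C_eq_zero {s : Multiset 𝕜} (hs : ∀ r ∈ s, ‖r‖ ≠ 1)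
    {x : ℤ → 𝕜} (hx : x ∈ bounded 𝕜) (h : aeval shift (s.map (X - C ·)).prod x = 0) : x = 0 := by
  induction s using Multiset.induction_on with
  | empty => simpa using h
  | cons r s ih =>
    rw [Multiset.map_cons, Multiset.prod_cons, map_mul, Module.End.mul_apply] at h
    set y := aeval shift (s.map (X - C ·)).prod x
    have hrec : ∀ n, y (n + 1) = r * y n := fun n => by
      have := congrFun h n
      simp only [map_sub, aeval_X, aeval_C, LinearMap.sub_apply, Module.algebraMap_end_apply,
        Pi.sub_apply, Pi.smul_apply, smul_eq_mul, Pi.zero_apply, shift_apply] at this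
      exact sub_eq_zero.mp this
    have hy : y = 0 := eq_zero_of_mem_bounded_of_apply_add_one
      (hs r (Multiset.mem_cons_self r s)) (aeval_shift_mem_bounded _ hx) hrec
    exact ih (fun t ht => hs t (Multiset.mem_cons_of_mem ht)) hy

theorem exists_isRoot_norm_eq_one [IsAlgClosed 𝕜] {P : 𝕜[X]} (hP : P ≠ 0) {x : ℤ → 𝕜}
    (hx : x ∈ bounded 𝕜) (hx₀ : x ≠ 0) (h : aeval shift P x = 0) :
    ∃ r, P.IsRoot r ∧ ‖r‖ = 1 := by
  by_contra! hroots
  refine hx₀ (eq_zero_of_aeval_shift_prod_X_sub_C_eq_zero (s := P.roots)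
    (fun r hr => hroots r (isRoot_of_mem_roots hr)) hx ?_)
  rw [← C_leadingCoeff_mul_prod_multiset_X_sub_C (p := P) IsAlgClosed.card_roots_eq_natDegree,
    map_mul, aeval_C, Module.End.mul_apply, Module.algebraMap_end_apply] at h
  exact (smul_eq_zero.mp h).resolve_left (leadingCoeff_ne_zero.mpr hP)

end IntSeq

theorem Function.Periodic.exists_norm_le {E : Type*} [SeminormedAddGroup E] {x : ℤ → E} {p : ℤ}
    (hx : Function.Periodic x p) (hp : 0 < p) : ∃ M, ∀ n, ‖x n‖ ≤ M := by
  obtain ⟨M, hM⟩ := ((Set.finite_Ico 0 p).image (fun n => ‖x n‖)).bddAbove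
  refine ⟨M, fun n => ?_⟩
  obtain ⟨m, hm, hxm⟩ := hx.exists_mem_Ico₀ hp n
  exact hxm ▸ hM ⟨m, hm, rfl⟩

theorem Finset.sum_four_of_lt {α M : Type*} [LinearOrder α] [AddCommMonoid M] (f : α → M)
    {a b c d : α} (hdc : d < c) (hcb : c < b) (hba : b < a) :
    ∑ s ∈ ({d, c, b, a} : Finset α), f s = f a + f b + f c + f d := by
  rw [Finset.sum_insert (by simp [hdc.ne, (hdc.trans hcb).ne, (hdc.trans (hcb.trans hba)).ne]),
    Finset.sum_insert (by simp [hcb.ne, (hcb.trans hba).ne]),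
    Finset.sum_insert (by simp [hba.ne]), Finset.sum_singleton]
  abel

theorem Polynomial.sum_X_pow_ne_zero {R : Type*} [Semiring R] [Nontrivial R] {K : Finset ℕ}
    (hK : 0 ∈ K) : (∑ s ∈ K, X ^ s : R[X]) ≠ 0 := by
  intro h
  simpa [finsetSum_coeff, coeff_X_pow, hK] using congrArg (coeff · 0) h

theorem exists_periodic_solution_of_isOfFinOrder {F : Type*} [DivisionRing F] {K : Finset ℕ}
    {w : F} (hw : IsOfFinOrder w) (h : ∑ s ∈ K, w ^ s = 0) :
    ∃ x : ℤ → F, x ≠ 0 ∧ (∃ p : ℤ, 1 ≤ p ∧ Function.Periodic x p) ∧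
      ∀ n : ℤ, ∑ s ∈ K, x (n + s) = 0 := by
  obtain ⟨m, hm, hwm⟩ := isOfFinOrder_iff_pow_eq_one.mp hw
  have hw₀ : w ≠ 0 := by rintro rfl; simp [hm.ne'] at hwm
  refine ⟨(w ^ ·), fun h₀ => by simpa using congrFun h₀ 0, ⟨m, by exact_mod_cast hm, fun n => ?_⟩,
    fun n => ?_⟩
  · simp [zpow_add₀ hw₀, hwm]
  · simp [zpow_add₀ hw₀, ← Finset.mul_sum, h]

theorem stmt_9 (a b c : ℕ) (hc : 0 < c) (hcb : c < b) (hba : b < a) :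
    ((∃ v : ℂ, ‖v‖ = 1 ∧ v ^ a + v ^ b + v ^ c + 1 = 0) →
      ∃ w : ℂ, (∃ m : ℕ, 0 < m ∧ w ^ m = 1) ∧ w ^ a + w ^ b + w ^ c + 1 = 0) ∧
    (Nat.gcd a (Nat.gcd b c) = 1 →
      ((∃ x : ℤ → ℂ, x ≠ 0 ∧ (∃ M : ℝ, ∀ n : ℤ, ‖x n‖ ≤ M) ∧
          ∀ n : ℤ, ∑ s ∈ ({0, c, b, a} : Finset ℕ), x (n + (s : ℤ)) = 0) ↔
        (∃ x : ℤ → ℂ, x ≠ 0 ∧ (∃ p : ℤ, 1 ≤ p ∧ ∀ n : ℤ, x (n + p) = x n) ∧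
          ∀ n : ℤ, ∑ s ∈ ({0, c, b, a} : Finset ℕ), x (n + (s : ℤ)) = 0))) := by
  refine ⟨fun ⟨v, hv, h⟩ => ⟨v, isOfFinOrder_iff_pow_eq_one.mp
    (isOfFinOrder_of_norm_eq_one_of_pow_add_pow_add_pow_add_one_eq_zero hv h), h⟩,
    fun _ => ⟨?_, ?_⟩⟩
  · rintro ⟨x, hx₀, hx, hsol⟩
    obtain ⟨w, hroot, hw⟩ := IntSeq.exists_isRoot_norm_eq_one (P := ∑ s ∈ {0, c, b, a}, X ^ s)
      (sum_X_pow_ne_zero (by simp)) hx hx₀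
      (funext fun n => (IntSeq.aeval_shift_sum_X_pow_apply _ x n).trans (hsol n))
    have hsum : ∑ s ∈ ({0, c, b, a} : Finset ℕ), w ^ s = 0 := by
      simpa [IsRoot, eval_finsetSum] using hroot
    refine exists_periodic_solution_of_isOfFinOrder ?_ hsum
    rw [Finset.sum_four_of_lt _ hc hcb hba, pow_zero] at hsum
    exact isOfFinOrder_of_norm_eq_one_of_pow_add_pow_add_pow_add_one_eq_zero hw hsum
  · rintro ⟨x, hx₀, ⟨p, hp, hper⟩, hsol⟩
    exact ⟨x, hx₀, Function.Periodic.exists_norm_le hper hp, hsol⟩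
end

section
/- Let k ≥ 2 be an integer, let F_k be the free group on k generators, and for g ∈ F_k let |g| denote the length of the reduced word representing g. If r ≥ 2 is an even integer, then the sphere S_r = {g ∈ F_k : |g| = r} is not a right tile of F_k: there is no set C ⊆ F_k such that the left translates c·S_r, c ∈ C, are pairwise disjoint and cover F_k. -/
/-!
In a tiling `C` of `F_k` by translates of `S_r`, a tile `c₀ ∈ C` lies in some other translate
`z * S_r`, so `w = z⁻¹ * c₀` has length `r = 2s`. Splitting the reduced word of `w` in half as
`u v` and choosing a letter `y` that cancels with neither half, `a = u yˢ` satisfies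
`|a| = |w⁻¹ a| = r`. Hence `z * a = c₀ * (w⁻¹ * a)` lies in both `z * S_r` and `c₀ * S_r`.
-/

def IsRightTile {G : Type*} [Group G] (S : Set G) : Prop :=
  ∃ C : Set G, (C.PairwiseDisjoint fun c => (fun s => c * s) '' S) ∧
    ⋃ c ∈ C, (fun s => c * s) '' S = Set.univ

theorem not_isRightTile_of_exists_inv_mul_mem {G : Type*} [Group G] {S : Set G}
    (hS₁ : 1 ∉ S) (hS : ∀ w ∈ S, ∃ a ∈ S, w⁻¹ * a ∈ S) : ¬ IsRightTile S := by
  rintro ⟨C, hdisj, hcov⟩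
  have hmem (g : G) := Set.mem_iUnion₂.mp (hcov.ge (Set.mem_univ g))
  obtain ⟨c, hc, -⟩ := hmem 1
  obtain ⟨z, hz, w, hw, rfl⟩ := hmem c
  obtain ⟨a, ha, hwa⟩ := hS w hw
  have hne : z ≠ z * w := fun h => hS₁ (by rwa [left_eq_mul.mp h] at hw)
  refine Set.disjoint_left.mp (hdisj hz hc hne) ⟨a, ha, rfl⟩ ⟨w⁻¹ * a, hwa, ?_⟩
  group

namespace FreeGroup

variable {α : Type*}

theorem IsReduced.append {L₁ L₂ : List (α × Bool)} (h₁ : IsReduced L₁)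
    (h₂ : IsReduced L₂) (h : ∀ x ∈ L₁.getLast?, ∀ y ∈ L₂.head?, y ≠ (x.1, !x.2)) :
    IsReduced (L₁ ++ L₂) := by
  refine List.isChain_append.mpr ⟨h₁, h₂, fun x hx y hy hxy => ?_⟩
  by_contra hne
  exact h x hx y hy (Prod.ext hxy.symm (Bool.eq_not.mpr (Ne.symm hne)))

theorem isReduced_replicate (n : ℕ) (x : α × Bool) : IsReduced (List.replicate n x) :=
  List.isChain_replicate_of_rel n fun _ => rfl

theorem inv_mk_replicate (n : ℕ) (x : α × Bool) :
    (mk (List.replicate n x))⁻¹ = mk (List.replicate n (x.1, !x.2)) := by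
  simp [inv_mk, invRev]

theorem exists_notMem_notMem [Nontrivial α] (o₁ o₂ : Option (α × Bool)) :
    ∃ y, y ∉ o₁ ∧ y ∉ o₂ := by
  suffices ∀ p q : α × Bool, ∃ y, y ≠ p ∧ y ≠ q by
    obtain ⟨d⟩ := (inferInstance : Nonempty α)
    obtain ⟨y, hp, hq⟩ := this (o₁.getD (d, true)) (o₂.getD (d, true))
    exact ⟨y, fun h => hp (by simp [Option.mem_def.mp h]),
      fun h => hq (by simp [Option.mem_def.mp h])⟩
  intro p q
  obtain ⟨j, hj⟩ := exists_ne p.1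
  by_cases hq : q.1 = j
  · refine ⟨(j, !q.2), fun h => hj (congrArg Prod.fst h), fun h => ?_⟩
    simpa using congrArg Prod.snd h
  · exact ⟨(j, true), fun h => hj (congrArg Prod.fst h),
      fun h => hq (congrArg Prod.fst h).symm⟩

variable [DecidableEq α]

theorem norm_mk_of_isReduced {L : List (α × Bool)} (h : IsReduced L) :
    norm (mk L) = L.length := by
  rw [norm, toWord_mk, h.reduce_eq]

theorem exists_norm_eq_norm_inv_mul_eq [Nontrivial α] (w : FreeGroup α) {m : ℕ}
    (hm : m ≤ norm w) (t : ℕ) :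
    ∃ a, norm a = m + t ∧ norm (w⁻¹ * a) = norm w - m + t := by
  set u := w.toWord.take m
  set v := w.toWord.drop m
  have hu : IsReduced u := isReduced_toWord.infix (List.take_prefix m _).isInfix
  have hv : IsReduced v := isReduced_toWord.infix (List.drop_suffix m _).isInfix
  have hw : w = mk u * mk v := by rw [mul_mk, List.take_append_drop, mk_toWord]
  obtain ⟨y, hyu, hyv⟩ :=
    exists_notMem_notMem (u.getLast?.map fun x => (x.1, !x.2)) v.head?
  have hua : IsReduced (u ++ List.replicate t y) := by
    refine hu.append (isReduced_replicate t y) fun x hx z hz => ?_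
    rw [List.eq_of_mem_replicate (List.mem_of_mem_head? hz)]
    exact fun h => hyu (h ▸ Option.mem_map_of_mem _ hx)
  have hva : IsReduced (List.replicate t (y.1, !y.2) ++ v) := by
    refine (isReduced_replicate t _).append hv fun x hx z hz => ?_
    rw [List.eq_of_mem_replicate (List.mem_of_mem_getLast? hx)]
    simp only [Bool.not_not, ne_eq]
    rintro rfl
    exact hyv hz
  have hlen : w.toWord.length = norm w := rfl
  refine ⟨mk u * mk (List.replicate t y), ?_, ?_⟩
  · rw [mul_mk, norm_mk_of_isReduced hua, List.length_append, List.length_take,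
      List.length_replicate]
    omega
  · have hcancel :
        (mk u * mk (List.replicate t y))⁻¹ * w = (mk (List.replicate t y))⁻¹ * mk v := by
      rw [hw]; group
    rw [← norm_inv_eq, mul_inv_rev, inv_inv, hcancel, inv_mk_replicate, mul_mk,
      norm_mk_of_isReduced hva, List.length_append, List.length_replicate, List.length_drop]
    omega

end FreeGroup

theorem stmt_18 (k r : ℕ) (hk : 2 ≤ k) (hr : 2 ≤ r) (hre : Even r) :
    ¬ ∃ C : Set (FreeGroup (Fin k)),
        (C.PairwiseDisjoint fun c => (fun s => c * s) ''
          {h : FreeGroup (Fin k) | FreeGroup.norm h = r}) ∧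
        ⋃ c ∈ C, (fun s => c * s) ''
          {h : FreeGroup (Fin k) | FreeGroup.norm h = r} = Set.univ := by
  have : Nontrivial (Fin k) := Fin.nontrivial_iff_two_le.mpr hk
  obtain ⟨s, rfl⟩ := hre
  refine not_isRightTile_of_exists_inv_mul_mem (by simp; omega)
    fun w (hw : w.norm = s + s) => ?_
  obtain ⟨a, ha, hwa⟩ := w.exists_norm_eq_norm_inv_mul_eq (m := s) (by omega) s
  exact ⟨a, ha, by rw [Set.mem_ofPred_eq, hwa, hw]; omega⟩
end
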